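/- Let n = 2, k ∈ ℕ with k ≥ 1, p ∈ ℤ with |p/k| ≤ 1, and let l₀, …, l_{k−1} ⊂ 𝕋² be the parallel closed geodesics lᵢ = {(x, (p/k)x + i/k mod 1) : x ∈ [0,1)}. Let Leb denote Lebesgue (Haar) probability measure on 𝕋², and μ_k := (1/k) Σᵢ (normalized arc-length measure on lᵢ). Then W₁(Leb, μ_k) ≥ c/k for a constant c > 0 independent of k and p (one may take c = 1/16). -/

import Mathlib

/-!
Only the easy half of Kantorovich duality is needed: if `ψ a - ψ b ≤ c a b`, every coupling of
`μ` and `ν` costs at least `∫ ψ dμ - ∫ ψ dν`. The lines `lᵢ` lie in the kernel of the character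
`(x, y) ↦ k y - p x` of `𝕋²`, so `ψ = ‖k y - p x‖ / (2k)` vanishes on the support of `μ_k`, and
`ψ` is `1`-Lipschitz for the flat metric because `|p| ≤ k`. Integrating first in `y`, and using
that `y ↦ k y` preserves Haar measure on the circle, gives `∫ ψ dLeb = (1/(2k)) ∫ ‖y‖ dy = 1/(8k)`.
-/

open MeasureTheory
open scoped ENNReal

/-- The 1-Wasserstein-type transport cost between two measures on `X` with respect to
a cost function `c`, defined as the infimum over couplings. -/
noncomputable def transportCost {X : Type*} [MeasurableSpace X]
    (c : X → X → ℝ) (μ ν : Measure X) : ℝ :=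
  sInf {r : ℝ | ∃ π : Measure (X × X),
    π.map Prod.fst = μ ∧ π.map Prod.snd = ν ∧ r = ∫ p, c p.1 p.2 ∂π}

/-- The flat (Euclidean) distance on the 2-torus `𝕋² = (ℝ/ℤ) × (ℝ/ℤ)`. -/
noncomputable def flatDist2
    (p q : AddCircle (1 : ℝ) × AddCircle (1 : ℝ)) : ℝ :=
  Real.sqrt ((dist p.1 q.1) ^ 2 + (dist p.2 q.2) ^ 2)

open Set

section Duality

variable {X : Type*} [TopologicalSpace X] [CompactSpace X] [SecondCountableTopology X]
  [MeasurableSpace X] [OpensMeasurableSpace X]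

theorem integral_sub_integral_le_transportCost {c : X → X → ℝ}
    (hc : Continuous (Function.uncurry c)) {μ ν : Measure X}
    [IsProbabilityMeasure μ] [IsProbabilityMeasure ν] {ψ : X → ℝ} (hψ : Continuous ψ)
    (hψc : ∀ a b, ψ a - ψ b ≤ c a b) :
    ∫ x, ψ x ∂μ - ∫ x, ψ x ∂ν ≤ transportCost c μ ν := by
  refine le_csInf ⟨_, μ.prod ν, by simp, by simp, rfl⟩ ?_
  rintro _ ⟨π, rfl, rfl, rfl⟩
  have : IsFiniteMeasure π := Measure.isFiniteMeasure_of_map measurable_fst.aemeasurable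
  have hint {f : X × X → ℝ} (hf : Continuous f) : Integrable f π :=
    hf.integrable_of_hasCompactSupport (.of_compactSpace f)
  rw [integral_map measurable_fst.aemeasurable hψ.aestronglyMeasurable,
    integral_map measurable_snd.aemeasurable hψ.aestronglyMeasurable,
    ← integral_sub (hint (f := fun z ↦ ψ z.1) (by fun_prop))
      (hint (f := fun z ↦ ψ z.2) (by fun_prop))]
  exact integral_mono (hint (by fun_prop)) (hint hc) fun z ↦ hψc z.1 z.2

end Duality

theorem intervalIntegral.integral_abs_neg_to_self {a : ℝ} (ha : 0 ≤ a) :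
    ∫ x in -a..a, |x| = a ^ 2 := by
  have hneg : ∫ x in -a..0, |x| = a ^ 2 / 2 := by
    rw [integral_congr (g := fun x ↦ -x) fun x hx ↦ abs_of_nonpos
      (by rw [uIcc_of_le (by linarith)] at hx; exact hx.2), integral_neg, integral_id]
    ring
  have hpos : ∫ x in (0 : ℝ)..a, |x| = a ^ 2 / 2 := by
    rw [integral_congr (g := fun x ↦ x) fun x hx ↦ abs_of_nonneg
      (by rw [uIcc_of_le ha] at hx; exact hx.1), integral_id]
    ring
  rw [← integral_add_adjacent_intervals (b := 0) (continuous_abs.intervalIntegrable _ _)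
    (continuous_abs.intervalIntegrable _ _), hneg, hpos]
  ring

namespace AddCircle

variable (T : ℝ) [Fact (0 < T)]

theorem integral_norm : ∫ z : AddCircle T, ‖z‖ = T ^ 2 / 4 := by
  have hT : 0 < T := Fact.out
  rw [← AddCircle.intervalIntegral_preimage T (-(T / 2)), show -(T / 2) + T = T / 2 by ring,
    intervalIntegral.integral_congr (g := fun x ↦ |x|) fun x hx ↦ ?_,
    intervalIntegral.integral_abs_neg_to_self (by positivity)]
  · ring
  rw [uIcc_of_le (by linarith)] at hx
  rw [norm_coe_eq_abs_iff T hT.ne', abs_of_pos hT, abs_le]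
  constructor <;> linarith [hx.1, hx.2]

theorem integral_norm_zsmul_sub {n : ℤ} (hn : n ≠ 0) (c : AddCircle T) :
    ∫ z : AddCircle T, ‖n • z - c‖ = T ^ 2 / 4 := by
  have hmp := Measure.measurePreserving_zsmul (volume : Measure (AddCircle T)) hn
  calc ∫ z : AddCircle T, ‖n • z - c‖
      = ∫ z, ‖z - c‖ ∂(volume.map (n • ·)) :=
        (integral_map hmp.measurable.aemeasurable
          (continuous_norm.comp (continuous_sub_right c)).aestronglyMeasurable).symm
    _ = ∫ z : AddCircle T, ‖z - c‖ := by rw [hmp.map_eq]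
    _ = T ^ 2 / 4 := by rw [integral_sub_right_eq_self (‖·‖) c, integral_norm]

end AddCircle

instance UnitAddCircle.isProbabilityMeasure_volume :
    IsProbabilityMeasure (volume : Measure UnitAddCircle) :=
  ⟨by simp⟩

theorem dist_fst_le_flatDist2 (a b : UnitAddCircle × UnitAddCircle) :
    dist a.1 b.1 ≤ flatDist2 a b :=
  Real.le_sqrt_of_sq_le (le_add_of_nonneg_right (sq_nonneg _))

theorem dist_snd_le_flatDist2 (a b : UnitAddCircle × UnitAddCircle) :
    dist a.2 b.2 ≤ flatDist2 a b :=
  Real.le_sqrt_of_sq_le (le_add_of_nonneg_left (sq_nonneg _))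

theorem continuous_flatDist2 : Continuous (Function.uncurry flatDist2) := by
  unfold flatDist2
  fun_prop

def lineForm (k p : ℤ) (q : UnitAddCircle × UnitAddCircle) : UnitAddCircle :=
  k • q.2 - p • q.1

theorem continuous_lineForm (k p : ℤ) : Continuous (lineForm k p) := by
  unfold lineForm
  fun_prop

theorem lineForm_coe_line {k : ℤ} (hk : k ≠ 0) (p i : ℤ) (x : ℝ) :
    lineForm k p (x, ((p / k * x + i / k : ℝ) : UnitAddCircle)) = 0 := by
  rw [lineForm, ← AddCircle.coe_zsmul, ← AddCircle.coe_zsmul, ← AddCircle.coe_sub,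
    zsmul_eq_mul, zsmul_eq_mul, show (k : ℝ) * (p / k * x + i / k) - p * x = i by
      field_simp; ring]
  exact (AddCircle.coe_eq_zero_iff 1).2 ⟨i, by simp⟩

noncomputable def lineTest (k p : ℤ) (q : UnitAddCircle × UnitAddCircle) : ℝ :=
  ‖lineForm k p q‖ / (2 * |(k : ℝ)|)

theorem continuous_lineTest (k p : ℤ) : Continuous (lineTest k p) :=
  (continuous_lineForm k p).norm.div_const _

theorem lineTest_coe_line {k : ℤ} (hk : k ≠ 0) (p i : ℤ) (x : ℝ) :
    lineTest k p (x, ((p / k * x + i / k : ℝ) : UnitAddCircle)) = 0 := by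
  rw [lineTest, lineForm_coe_line hk, norm_zero, zero_div]

theorem lineTest_sub_le_flatDist2 {k p : ℤ} (hpk : |(p : ℝ)| ≤ |(k : ℝ)|)
    (a b : UnitAddCircle × UnitAddCircle) :
    lineTest k p a - lineTest k p b ≤ flatDist2 a b := by
  have h : lineForm k p a - lineForm k p b = k • (a.2 - b.2) - p • (a.1 - b.1) := by
    simp only [lineForm, smul_sub]
    abel
  have hnorm : ‖lineForm k p a‖ - ‖lineForm k p b‖ ≤ 2 * |(k : ℝ)| * flatDist2 a b :=
    calc ‖lineForm k p a‖ - ‖lineForm k p b‖ ≤ ‖k • (a.2 - b.2) - p • (a.1 - b.1)‖ :=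
          h ▸ norm_sub_norm_le _ _
      _ ≤ ‖k‖ * ‖a.2 - b.2‖ + ‖p‖ * ‖a.1 - b.1‖ :=
          (norm_sub_le _ _).trans (add_le_add (norm_zsmul_le _ _) (norm_zsmul_le _ _))
      _ = |(k : ℝ)| * dist a.2 b.2 + |(p : ℝ)| * dist a.1 b.1 := by
          simp only [Int.norm_eq_abs, dist_eq_norm]
      _ ≤ |(k : ℝ)| * flatDist2 a b + |(k : ℝ)| * flatDist2 a b := by
          gcongr
          · exact dist_snd_le_flatDist2 a b
          · exact dist_fst_le_flatDist2 a b
      _ = 2 * |(k : ℝ)| * flatDist2 a b := by ring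
  rcases eq_or_ne k 0 with rfl | hk
  · simp [lineTest, flatDist2]
  rw [lineTest, lineTest, ← sub_div, div_le_iff₀ (by positivity)]
  linarith

theorem integral_lineTest {k : ℤ} (hk : k ≠ 0) (p : ℤ) :
    ∫ q : UnitAddCircle × UnitAddCircle, lineTest k p q = 1 / (8 * |(k : ℝ)|) := by
  have hint : Integrable (fun q ↦ ‖lineForm k p q‖) (volume.prod volume) :=
    (continuous_lineForm k p).norm.integrable_of_hasCompactSupport (.of_compactSpace _)
  unfold lineTest
  rw [show (1 : ℝ) / (8 * |(k : ℝ)|) = 1 / 4 / (2 * |(k : ℝ)|) by ring,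
    integral_div, Measure.volume_eq_prod, integral_prod _ hint]
  simp only [lineForm, AddCircle.integral_norm_zsmul_sub 1 hk]
  simp [measureReal_def]

section Mixtures

variable {α β ι : Type*} [MeasurableSpace α] [MeasurableSpace β]

theorem isProbabilityMeasure_inv_card_smul_sum {s : Finset ι} (hs : s.Nonempty)
    {P : ι → Measure α} (hP : ∀ i ∈ s, IsProbabilityMeasure (P i)) :
    IsProbabilityMeasure ((s.card : ℝ≥0∞)⁻¹ • ∑ i ∈ s, P i) := by
  constructor
  rw [Measure.smul_apply, Measure.coe_finsetSum, Finset.sum_apply,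
    Finset.sum_congr rfl fun i hi ↦ (hP i hi).measure_univ, Finset.sum_const, nsmul_one,
    smul_eq_mul, ENNReal.inv_mul_cancel (by simpa using hs.ne_empty) (by simp)]

theorem ae_smul_sum_map_of_forall {f : ι → α → β} (hf : ∀ i, Measurable (f i))
    {p : β → Prop} (hp : MeasurableSet {y | p y}) (h : ∀ i x, p (f i x))
    (c : ℝ≥0∞) (s : Finset ι) (μ : Measure α) :
    ∀ᵐ y ∂(c • ∑ i ∈ s, μ.map (f i)), p y := by
  rw [ae_iff, Measure.smul_apply, Measure.coe_finsetSum, Finset.sum_apply]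
  refine mul_eq_zero_of_right c (Finset.sum_eq_zero fun i _ ↦ ?_)
  change μ.map (f i) {y | p y}ᶜ = 0
  rw [Measure.map_apply (hf i) hp.compl]
  simp [h]

end Mixtures

/-- Lower bound for the 1-Wasserstein distance (flat metric on `𝕋²`) between Haar
probability measure on `𝕋²` and the uniform measure `μ_k` on the union of the `k`
parallel closed geodesics `lᵢ = {(x, (p/k)x + i/k) : x ∈ [0,1)}`:
`W₁(Leb, μ_k) ≥ 1/(16 k)`, for all `k ≥ 1` and all `p ∈ ℤ` with `|p| ≤ k`. -/
theorem wasserstein_lower_bound_lines (k : ℕ) (hk : 1 ≤ k) (p : ℤ)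
    (hp : |(p : ℝ) / (k : ℝ)| ≤ 1) :
    (1 : ℝ) / (16 * (k : ℝ)) ≤
      transportCost flatDist2
        (volume : Measure (AddCircle (1 : ℝ) × AddCircle (1 : ℝ)))
        (((k : ℝ≥0∞))⁻¹ • ∑ i ∈ Finset.range k,
          Measure.map
            (fun x : ℝ =>
              ((x : AddCircle (1 : ℝ)),
                ((((p : ℝ) / (k : ℝ)) * x + (i : ℝ) / (k : ℝ) : ℝ) :
                  AddCircle (1 : ℝ))))
            (volume.restrict (Set.Ico (0 : ℝ) 1))) := by
  have hkℝ : (0 : ℝ) < k := by exact_mod_cast hk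
  have hkℕ : k ≠ 0 := by omega
  have hkℤ : (k : ℤ) ≠ 0 := by omega
  have hk_abs : |((k : ℤ) : ℝ)| = k := by rw [Int.cast_natCast, abs_of_pos hkℝ]
  have hpk : |(p : ℝ)| ≤ |((k : ℤ) : ℝ)| := by
    rwa [hk_abs, ← div_le_one hkℝ, ← abs_of_pos hkℝ, ← abs_div]
  set line : ℕ → ℝ → UnitAddCircle × UnitAddCircle := fun i x ↦ (x, (p / k * x + i / k : ℝ))
  have hline (i : ℕ) : Continuous (line i) := by fun_prop
  have hline_zero (i : ℕ) (x : ℝ) : lineTest k p (line i x) = 0 := by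
    simpa [line] using lineTest_coe_line hkℤ p i x
  set μk : Measure (UnitAddCircle × UnitAddCircle) :=
    (k : ℝ≥0∞)⁻¹ • ∑ i ∈ Finset.range k, (volume.restrict (Set.Ico (0 : ℝ) 1)).map (line i)
  have : IsProbabilityMeasure (volume.restrict (Set.Ico (0 : ℝ) 1)) := ⟨by simp⟩
  have : IsProbabilityMeasure μk := by
    simpa using isProbabilityMeasure_inv_card_smul_sum (Finset.nonempty_range_iff.2 hkℕ)
      fun i _ ↦ Measure.isProbabilityMeasure_map (hline i).aemeasurable
  calc (1 : ℝ) / (16 * k) ≤ 1 / (8 * k) - 0 := by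
        rw [sub_zero]
        exact one_div_le_one_div_of_le (by positivity) (by linarith)
    _ = (∫ q, lineTest k p q) - ∫ q, lineTest k p q ∂μk := by
        rw [integral_lineTest hkℤ, hk_abs, integral_eq_zero_of_ae
          (ae_smul_sum_map_of_forall (fun i ↦ (hline i).measurable)
            ((continuous_lineTest _ _).measurable (measurableSet_singleton 0)) hline_zero _ _ _)]
    _ ≤ _ := integral_sub_integral_le_transportCost continuous_flatDist2
        (continuous_lineTest _ _) (lineTest_sub_le_flatDist2 hpk)
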